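/- On an almost Hermitian manifold, the Riemannian scalar curvature s, the Riemannian-type scalar curvature s_R = h^{i\bar\ell} h^{k\bar j} R_{i\bar j k\bar\ell}, and the Hermitian scalar curvature s_H = h^{i\bar j} h^{k\bar\ell} R_{i\bar j k\bar\ell} satisfy s = 4 s_R - 2 s_H. -/

import Mathlib

open Complex BigOperators

noncomputable section

/-- Index set for real coordinates `x^1,…,x^n, x^{n+1},…,x^{2n}` on an
almost Hermitian manifold of real dimension `2n`:  `Sum.inl i ↔ x^i`,
`Sum.inr i ↔ x^{I} (I = i+n)`. -/
abbrev Ix (n : ℕ) := Sum (Fin n) (Fin n)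

variable {n : ℕ}

/-- Inclusion of a real tangent vector into the complexified tangent space. -/
def cx (v : Ix n → ℝ) : Ix n → ℂ := fun a => (v a : ℂ)

/-- The (ℂ-linearly extended) almost complex structure `J`:
`J(∂/∂x^i) = ∂/∂x^I`, `J(∂/∂x^I) = -∂/∂x^i`. -/
def Jc (v : Ix n → ℂ) : Ix n → ℂ :=
  fun a => Sum.elim (fun i => -v (Sum.inr i)) (fun i => v (Sum.inl i)) a

/-- The complex tangent vector `∂/∂z^i = (∂/∂x^i - √-1 ∂/∂x^I)/2`. -/
def Zv (i : Fin n) : Ix n → ℂ := fun a =>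
  if a = Sum.inl i then 1/2 else if a = Sum.inr i then -Complex.I/2 else 0

/-- The complex tangent vector `∂/∂z̄^i = (∂/∂x^i + √-1 ∂/∂x^I)/2`. -/
def Zbarv (i : Fin n) : Ix n → ℂ := fun a =>
  if a = Sum.inl i then 1/2 else if a = Sum.inr i then Complex.I/2 else 0

/-! Because `g` is `J`-invariant, `g(∂_i, ∂_k) = g(∂_ī, ∂_k̄) = 0`, so the inverse metric is
`h^{i j̄} (∂_i ⊗ ∂_j̄ + ∂_j̄ ⊗ ∂_i)`. Hence the trace of any bilinear form `B` over a real
orthonormal frame is `h^{i j̄} (B(∂_i, ∂_j̄) + B(∂_j̄, ∂_i))`. Taking this trace twice writes `s` as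
an `h`-contraction of four components of `R` of type `(1,1,1,1)` in various slot orders; the
first Bianchi identity and the symmetries of `R` turn each into a component `R_{i j̄ k l̄}`,
and relabelling the summation indices collects them into `4 s_R - 2 s_H`. -/

section Frame

variable {K V ι : Type*} [Field K] [AddCommGroup V] [Module K V] [Fintype ι] [DecidableEq ι]

theorem eq_sum_apply_smul_of_orthonormal [FiniteDimensional K V] (g : LinearMap.BilinForm K V)
    {f : ι → V} (hf : ∀ a b, g (f a) (f b) = if a = b then 1 else 0)
    (hcard : Fintype.card ι = Module.finrank K V) (x : V) :
    x = ∑ a, g (f a) x • f a := by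
  have hli : LinearIndependent K f := by
    refine LinearMap.BilinForm.linearIndependent_of_iIsOrtho (B := g) ?_ fun a => by simp [hf]
    exact LinearMap.BilinForm.iIsOrtho_def.2 fun a b hab => by simp [hf, hab]
  set b := basisOfLinearIndependentOfCardEqFinrank' f hli hcard
  have hx : ∑ a, b.repr x a • f a = x := by simpa [b] using b.sum_repr x
  have hc : ∀ a, g (f a) x = b.repr x a := fun a => by
    conv_lhs => rw [← hx]
    simp [hf]
  simp_rw [hc, hx]

end Frame

theorem Jc_Zv (i : Fin n) : Jc (Zv i) = I • Zv i := by
  ext (k | k) <;> by_cases h : k = i <;> simp [Jc, Zv, h, div_eq_mul_inv, ← mul_assoc]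

theorem Jc_Zbarv (i : Fin n) : Jc (Zbarv i) = (-I) • Zbarv i := by
  ext (k | k) <;> by_cases h : k = i <;> simp [Jc, Zbarv, h, div_eq_mul_inv, ← mul_assoc]

theorem Zv_add_Zbarv (i : Fin n) : Zv i + Zbarv i = Pi.single (Sum.inl i) 1 := by
  ext (k | k) <;> by_cases h : k = i <;> simp [Zv, Zbarv, h, neg_div, ← two_mul]

theorem I_smul_Zv_sub_Zbarv (i : Fin n) : I • (Zv i - Zbarv i) = Pi.single (Sum.inr i) 1 := by
  ext (k | k) <;> by_cases h : k = i <;>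
    simp [Zv, Zbarv, h, mul_sub, mul_div_assoc', neg_div, ← two_mul]

theorem linearMap_ext_Zv_Zbarv {M : Type*} [AddCommGroup M] [Module ℂ M]
    {φ ψ : (Ix n → ℂ) →ₗ[ℂ] M} (hZ : ∀ i, φ (Zv i) = ψ (Zv i))
    (hZbar : ∀ i, φ (Zbarv i) = ψ (Zbarv i)) : φ = ψ := by
  refine (Pi.basisFun ℂ (Ix n)).ext fun a => ?_
  rcases a with i | i
  · simp only [Pi.basisFun_apply, ← Zv_add_Zbarv, map_add, hZ, hZbar]
  · simp only [Pi.basisFun_apply, ← I_smul_Zv_sub_Zbarv, map_smul, map_sub, hZ, hZbar]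

theorem apply_eq_zero_of_Jc_eq_smul (g : LinearMap.BilinForm ℂ (Ix n → ℂ))
    (hgJ : ∀ X Y, g (Jc X) (Jc Y) = g X Y) {X Y : Ix n → ℂ} {c : ℂ}
    (hX : Jc X = c • X) (hY : Jc Y = c • Y) (hc : c * c ≠ 1) : g X Y = 0 := by
  have h := hgJ X Y
  rw [hX, hY, map_smul, map_smul, LinearMap.smul_apply, smul_eq_mul, smul_eq_mul] at h
  have h' : (c * c - 1) * g X Y = 0 := by linear_combination h
  exact (mul_eq_zero.1 h').resolve_left (sub_ne_zero.2 hc)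

namespace MultilinearMap

variable {K V M : Type*} [CommSemiring K] [AddCommMonoid V] [Module K V] [AddCommMonoid M]
  [Module K M] (T : MultilinearMap K (fun _ : Fin 4 => V) M)

def bilinMiddle (w z : V) : V →ₗ[K] V →ₗ[K] M :=
  LinearMap.mk₂ K (fun X Y => T ![w, X, Y, z])
    (fun a b y => by
      convert T.map_update_add ![w, 0, y, z] 1 a b using 3 <;> ext i <;> fin_cases i <;> rfl)
    (fun c a y => by
      convert T.map_update_smul ![w, 0, y, z] 1 c a using 3 <;> ext i <;> fin_cases i <;> rfl)
    (fun x a b => by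
      convert T.map_update_add ![w, x, 0, z] 2 a b using 3 <;> ext i <;> fin_cases i <;> rfl)
    (fun c x a => by
      convert T.map_update_smul ![w, x, 0, z] 2 c a using 3 <;> ext i <;> fin_cases i <;> rfl)

@[simp]
theorem bilinMiddle_apply (w z X Y : V) : T.bilinMiddle w z X Y = T ![w, X, Y, z] := rfl

def bilinOuter (x y : V) : V →ₗ[K] V →ₗ[K] M :=
  LinearMap.mk₂ K (fun X Y => T ![X, x, y, Y])
    (fun a b z => by
      convert T.map_update_add ![0, x, y, z] 0 a b using 3 <;> ext i <;> fin_cases i <;> rfl)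
    (fun c a z => by
      convert T.map_update_smul ![0, x, y, z] 0 c a using 3 <;> ext i <;> fin_cases i <;> rfl)
    (fun w a b => by
      convert T.map_update_add ![w, x, y, 0] 3 a b using 3 <;> ext i <;> fin_cases i <;> rfl)
    (fun c w a => by
      convert T.map_update_smul ![w, x, y, 0] 3 c a using 3 <;> ext i <;> fin_cases i <;> rfl)

@[simp]
theorem bilinOuter_apply (x y X Y : V) : T.bilinOuter x y X Y = T ![X, x, y, Y] := rfl

end MultilinearMap

section Trace

variable (g : LinearMap.BilinForm ℂ (Ix n → ℂ)) (hinv : Fin n → Fin n → ℂ)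

theorem sum_hinv_mul_apply_Zv_Zbarv
    (hinvh : ∀ i k, (∑ l, hinv i l * g (Zv k) (Zbarv l)) = if i = k then 1 else 0) (j k : Fin n) :
    ∑ i, hinv i j * g (Zv i) (Zbarv k) = if j = k then 1 else 0 := by
  let H : Matrix (Fin n) (Fin n) ℂ := .of fun l k => g (Zv k) (Zbarv l)
  have hleft : Matrix.of hinv * H = 1 := by
    ext i k
    simpa [Matrix.mul_apply, Matrix.one_apply, H] using hinvh i k
  have hright : (H * Matrix.of hinv) k j = (1 : Matrix (Fin n) (Fin n) ℂ) k j := by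
    rw [mul_eq_one_comm.mp hleft]
  simp only [Matrix.mul_apply, Matrix.one_apply, H, Matrix.of_apply] at hright
  simp_rw [mul_comm (hinv _ j), hright, eq_comm]

theorem sum_hinv_smul_eq_self (hgsym : ∀ X Y, g X Y = g Y X)
    (hgJ : ∀ X Y, g (Jc X) (Jc Y) = g X Y)
    (hinvh : ∀ i k, (∑ l, hinv i l * g (Zv k) (Zbarv l)) = if i = k then 1 else 0)
    (X : Ix n → ℂ) :
    ∑ i, ∑ j, hinv i j • (g (Zv i) X • Zbarv j + g (Zbarv j) X • Zv i) = X := by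
  have hZZ : ∀ i k, g (Zv i) (Zv k) = 0 := fun i k =>
    apply_eq_zero_of_Jc_eq_smul g hgJ (Jc_Zv i) (Jc_Zv k) (by norm_num)
  have hZZbar : ∀ i k, g (Zbarv i) (Zbarv k) = 0 := fun i k =>
    apply_eq_zero_of_Jc_eq_smul g hgJ (Jc_Zbarv i) (Jc_Zbarv k) (by norm_num)
  let P : (Ix n → ℂ) →ₗ[ℂ] Ix n → ℂ :=
    ∑ i, ∑ j, hinv i j • ((g (Zv i)).smulRight (Zbarv j) + (g (Zbarv j)).smulRight (Zv i))
  have hP : P = LinearMap.id := by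
    refine linearMap_ext_Zv_Zbarv (fun k => ?_) (fun k => ?_)
    · simp [P, hZZ, smul_smul, hgsym (Zbarv _), ← Finset.sum_smul, hinvh]
    · simp only [P, LinearMap.sum_apply, LinearMap.smul_apply, LinearMap.add_apply,
        LinearMap.smulRight_apply, hZZbar, zero_smul, add_zero, smul_smul, LinearMap.id_apply]
      rw [Finset.sum_comm]
      simp [← Finset.sum_smul, sum_hinv_mul_apply_Zv_Zbarv g hinv hinvh]
  simpa [P] using LinearMap.congr_fun hP X

theorem sum_apply_frame_eq_sum_hinv (hgsym : ∀ X Y, g X Y = g Y X)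
    (hgJ : ∀ X Y, g (Jc X) (Jc Y) = g X Y) {f : Ix n → Ix n → ℂ}
    (horth : ∀ a b, g (f a) (f b) = if a = b then 1 else 0)
    (hinvh : ∀ i k, (∑ l, hinv i l * g (Zv k) (Zbarv l)) = if i = k then 1 else 0)
    (B : LinearMap.BilinForm ℂ (Ix n → ℂ)) :
    ∑ a, B (f a) (f a) = ∑ i, ∑ j, hinv i j * (B (Zv i) (Zbarv j) + B (Zbarv j) (Zv i)) := by
  have hexp := eq_sum_apply_smul_of_orthonormal g horth (Module.finrank_fintype_fun_eq_card ℂ).symm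
  calc ∑ a, B (f a) (f a)
      = ∑ a, B (f a)
          (∑ i, ∑ j, hinv i j • (g (Zv i) (f a) • Zbarv j + g (Zbarv j) (f a) • Zv i)) := by
        simp_rw [sum_hinv_smul_eq_self g hinv hgsym hgJ hinvh]
    _ = ∑ i, ∑ j, hinv i j * (B (∑ a, g (f a) (Zv i) • f a) (Zbarv j)
          + B (∑ a, g (f a) (Zbarv j) • f a) (Zv i)) := by
        simp only [map_sum, map_add, map_smul, LinearMap.sum_apply,
          LinearMap.smul_apply, smul_eq_mul, Finset.mul_sum, hgsym (f _), ← Finset.sum_add_distrib]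
        rw [Finset.sum_comm]
        exact Finset.sum_congr rfl fun i _ => Finset.sum_comm
    _ = ∑ i, ∑ j, hinv i j * (B (Zv i) (Zbarv j) + B (Zbarv j) (Zv i)) := by
        simp only [← hexp]

theorem sum_sum_frame_eq_sum_hinv (hgsym : ∀ X Y, g X Y = g Y X)
    (hgJ : ∀ X Y, g (Jc X) (Jc Y) = g X Y) {f : Ix n → Ix n → ℂ}
    (horth : ∀ a b, g (f a) (f b) = if a = b then 1 else 0)
    (hinvh : ∀ i k, (∑ l, hinv i l * g (Zv k) (Zbarv l)) = if i = k then 1 else 0)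
    (T : MultilinearMap ℂ (fun _ : Fin 4 => Ix n → ℂ) ℂ) :
    ∑ a, ∑ b, T ![f b, f a, f a, f b] =
      ∑ i, ∑ j, ∑ k, ∑ l, hinv i j * hinv k l *
        (T ![Zv k, Zv i, Zbarv j, Zbarv l] + T ![Zv k, Zbarv j, Zv i, Zbarv l]
          + (T ![Zbarv l, Zv i, Zbarv j, Zv k] + T ![Zbarv l, Zbarv j, Zv i, Zv k])) := by
  have trace := sum_apply_frame_eq_sum_hinv g hinv hgsym hgJ horth hinvh
  calc ∑ a, ∑ b, T ![f b, f a, f a, f b]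
      = ∑ b, ∑ a, T.bilinMiddle (f b) (f b) (f a) (f a) := Finset.sum_comm
    _ = ∑ b, ∑ i, ∑ j, hinv i j *
          (T ![f b, Zv i, Zbarv j, f b] + T ![f b, Zbarv j, Zv i, f b]) := by
        simp_rw [trace, MultilinearMap.bilinMiddle_apply]
    _ = ∑ i, ∑ j, hinv i j * ∑ b,
          (T.bilinOuter (Zv i) (Zbarv j) + T.bilinOuter (Zbarv j) (Zv i)) (f b) (f b) := by
        simp only [LinearMap.add_apply, MultilinearMap.bilinOuter_apply, Finset.mul_sum]
        rw [Finset.sum_comm]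
        exact Finset.sum_congr rfl fun i _ => Finset.sum_comm
    _ = _ := by
        simp_rw [trace, LinearMap.add_apply, MultilinearMap.bilinOuter_apply, Finset.mul_sum,
          mul_assoc]

end Trace

section Reindex

variable {α M : Type*} [Fintype α] [AddCommMonoid M]

theorem sum_sum_sum_swap₁₃ (G : α → α → α → M) :
    ∑ i, ∑ j, ∑ k, G k j i = ∑ i, ∑ j, ∑ k, G i j k := by
  rw [Finset.sum_comm]
  simp_rw [Finset.sum_comm (γ := α) (f := fun i k => G k _ i)]
  exact Finset.sum_comm

theorem sum_sum_sum_sum_swap₁₃ (F : α → α → α → α → M) :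
    ∑ i, ∑ j, ∑ k, ∑ l, F k j i l = ∑ i, ∑ j, ∑ k, ∑ l, F i j k l :=
  sum_sum_sum_swap₁₃ fun i j k => ∑ l, F i j k l

theorem sum_sum_sum_sum_swap₂₄ (F : α → α → α → α → M) :
    ∑ i, ∑ j, ∑ k, ∑ l, F i l k j = ∑ i, ∑ j, ∑ k, ∑ l, F i j k l :=
  Finset.sum_congr rfl fun i _ => sum_sum_sum_swap₁₃ (F i)

end Reindex

theorem curvature_four_term_eq {V 𝕜 : Type*} [CommRing 𝕜] (R : (Fin 4 → V) → 𝕜)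
    (hRskew : ∀ X Y Z W, R ![X, Y, Z, W] = - R ![Y, X, Z, W])
    (hRpair : ∀ X Y Z W, R ![X, Y, Z, W] = R ![Z, W, X, Y])
    (hRbianchi : ∀ X Y Z W, R ![X, Y, Z, W] + R ![Y, Z, X, W] + R ![Z, X, Y, W] = 0)
    (A B C D : V) :
    R ![C, A, B, D] + R ![C, B, A, D] + (R ![D, A, B, C] + R ![D, B, A, C]) =
      -R ![A, B, C, D] - R ![C, D, A, B] + 2 * R ![C, B, A, D] + 2 * R ![A, D, C, B] := by
  linear_combination hRbianchi C A B D - 2 * hRskew B C A D + hRskew D A B C - hRpair A D B C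
    + hRpair D B A C + hRbianchi A C D B - hRskew D A C B + hRpair C B A D

theorem sum_mul_mul_curvature_combination {α 𝕜 : Type*} [Fintype α] [CommRing 𝕜]
    (h : α → α → 𝕜) (Q : α → α → α → α → 𝕜) :
    ∑ i, ∑ j, ∑ k, ∑ l, h i j * h k l *
        (-Q i j k l - Q k l i j + 2 * Q k j i l + 2 * Q i l k j) =
      4 * (∑ i, ∑ j, ∑ k, ∑ l, h i l * h k j * Q i j k l)
        - 2 * (∑ i, ∑ j, ∑ k, ∑ l, h i j * h k l * Q i j k l) := by
  have hpair : ∑ i, ∑ j, ∑ k, ∑ l, h i j * h k l * Q k l i j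
      = ∑ i, ∑ j, ∑ k, ∑ l, h i j * h k l * Q i j k l := by
    rw [← sum_sum_sum_sum_swap₁₃, ← sum_sum_sum_sum_swap₂₄]
    ac_rfl
  have hswap₁₃ : ∑ i, ∑ j, ∑ k, ∑ l, h i j * h k l * Q k j i l
      = ∑ i, ∑ j, ∑ k, ∑ l, h i l * h k j * Q i j k l := by
    rw [← sum_sum_sum_sum_swap₁₃]
    ac_rfl
  have hswap₂₄ : ∑ i, ∑ j, ∑ k, ∑ l, h i j * h k l * Q i l k j
      = ∑ i, ∑ j, ∑ k, ∑ l, h i l * h k j * Q i j k l := by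
    rw [← sum_sum_sum_sum_swap₂₄]
  simp only [mul_add, mul_sub, mul_neg, Finset.sum_add_distrib, Finset.sum_sub_distrib,
    Finset.sum_neg_distrib, mul_left_comm _ (2 : 𝕜), ← Finset.mul_sum, hpair, hswap₁₃, hswap₂₄]
  ring

theorem scalar_eq_four_sR_sub_two_sH_general
    (gc : (Ix n → ℂ) →ₗ[ℂ] (Ix n → ℂ) →ₗ[ℂ] ℂ)
    (R : MultilinearMap ℂ (fun _ : Fin 4 => (Ix n → ℂ)) ℂ)
    (e : Ix n → (Ix n → ℝ))
    (hinv : Fin n → Fin n → ℂ)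
    -- `g` is symmetric, real-valued and positive definite on real vectors,
    -- and `J`-invariant:
    (hgsym : ∀ X Y, gc X Y = gc Y X)
    (hgJ : ∀ X Y, gc (Jc X) (Jc Y) = gc X Y)
    -- `{e a}` is a (real) orthonormal frame:
    (horth : ∀ a b, gc (cx (e a)) (cx (e b)) = if a = b then 1 else 0)
    -- `hinv` is the transposed inverse of `h_{i\bar j} = g(∂/∂z^i, ∂/∂z̄^j)`:
    (hinvh : ∀ i k, (∑ l, hinv i l * gc (Zv k) (Zbarv l)) = if i = k then 1 else 0)
    -- the complexified curvature tensor has the symmetries of a Riemannian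
    -- curvature tensor, is real on real vectors, and satisfies the
    -- first Bianchi identity:
    (hRskew : ∀ X Y Z W, R ![X, Y, Z, W] = - R ![Y, X, Z, W])
    (hRpair : ∀ X Y Z W, R ![X, Y, Z, W] = R ![Z, W, X, Y])
    (hRbianchi : ∀ X Y Z W, R ![X, Y, Z, W] + R ![Y, Z, X, W] + R ![Z, X, Y, W] = 0) :
    (∑ a : Ix n, ∑ b : Ix n, R ![cx (e b), cx (e a), cx (e a), cx (e b)]) =
      4 * (∑ i, ∑ j, ∑ k, ∑ l, hinv i l * hinv k j * R ![Zv i, Zbarv j, Zv k, Zbarv l])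
        - 2 * (∑ i, ∑ j, ∑ k, ∑ l, hinv i j * hinv k l * R ![Zv i, Zbarv j, Zv k, Zbarv l]) := by
  refine (sum_sum_frame_eq_sum_hinv gc hinv hgsym hgJ horth hinvh R).trans ?_
  simp_rw [curvature_four_term_eq R hRskew hRpair hRbianchi]
  exact sum_mul_mul_curvature_combination hinv fun i j k l => R ![Zv i, Zbarv j, Zv k, Zbarv l]

/-- the Riemannian scalar curvature `s`, the Riemannian-type
scalar curvature `s_R = h^{i\bar ℓ}h^{k\bar j}R_{i\bar j k\bar ℓ}` and the Hermitian
scalar curvature `s_H = h^{i\bar j}h^{k\bar ℓ}R_{i\bar j k\bar ℓ}` satisfy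
`s = 4 s_R - 2 s_H`. -/
theorem scalar_eq_four_sR_sub_two_sH
    (gc : (Ix n → ℂ) →ₗ[ℂ] (Ix n → ℂ) →ₗ[ℂ] ℂ)
    (R : MultilinearMap ℂ (fun _ : Fin 4 => (Ix n → ℂ)) ℂ)
    (e : Ix n → (Ix n → ℝ))
    (hinv : Fin n → Fin n → ℂ)
    -- `g` is symmetric, real-valued and positive definite on real vectors,
    -- and `J`-invariant:
    (hgsym : ∀ X Y, gc X Y = gc Y X)
    (hgreal : ∀ X Y : Ix n → ℝ, (gc (cx X) (cx Y)).im = 0)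
    (hgpos : ∀ X : Ix n → ℝ, X ≠ 0 → 0 < (gc (cx X) (cx X)).re)
    (hgJ : ∀ X Y, gc (Jc X) (Jc Y) = gc X Y)
    -- `{e a}` is a (real) orthonormal frame:
    (horth : ∀ a b, gc (cx (e a)) (cx (e b)) = if a = b then 1 else 0)
    -- `hinv` is the transposed inverse of `h_{i\bar j} = g(∂/∂z^i, ∂/∂z̄^j)`:
    (hinvh : ∀ i k, (∑ l, hinv i l * gc (Zv k) (Zbarv l)) = if i = k then 1 else 0)
    -- the complexified curvature tensor has the symmetries of a Riemannian
    -- curvature tensor, is real on real vectors, and satisfies the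
    -- first Bianchi identity:
    (hRskew : ∀ X Y Z W, R ![X, Y, Z, W] = - R ![Y, X, Z, W])
    (hRpair : ∀ X Y Z W, R ![X, Y, Z, W] = R ![Z, W, X, Y])
    (hRreal : ∀ X Y Z W : Ix n → ℝ, (R ![cx X, cx Y, cx Z, cx W]).im = 0)
    (hRbianchi : ∀ X Y Z W, R ![X, Y, Z, W] + R ![Y, Z, X, W] + R ![Z, X, Y, W] = 0) :
    (∑ a : Ix n, ∑ b : Ix n, R ![cx (e b), cx (e a), cx (e a), cx (e b)]) =
      4 * (∑ i, ∑ j, ∑ k, ∑ l, hinv i l * hinv k j * R ![Zv i, Zbarv j, Zv k, Zbarv l])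
        - 2 * (∑ i, ∑ j, ∑ k, ∑ l, hinv i j * hinv k l * R ![Zv i, Zbarv j, Zv k, Zbarv l]) :=
  scalar_eq_four_sR_sub_two_sH_general gc R e hinv hgsym hgJ horth hinvh hRskew hRpair hRbianchi
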